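/- arXiv:2007.09046 — 5 statements merged into one kernel-verified Lean document; each statement's English description precedes it below -/
import Mathlib

section
/- Let λ_1, …, λ_q be ℂ-linear functionals on ℂⁿ that are linearly independent over ℤ, and let ω : ℂⁿ → (ℂ∖{0})^q be the standard winding ω(z) = (exp(λ_1(z)), …, exp(λ_q(z))). Then the image ω(ℂⁿ) is Zariski dense in the torus (ℂ∖{0})^q: for every nonzero Laurent polynomial F ∈ ℂ[ℤ^q] in q variables there exists z ∈ ℂⁿ such that F evaluated at ω(z) is nonzero. -/
set_option autoImplicit false

/-!
By `ℤ`-independence, distinct exponents `m ∈ ℤ^q` give distinct functionals `μ_m = ∑ m_j λ_j`,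
and distinct linear functionals `f` give distinct characters `z ↦ exp (f z)` of the additive group
`ℂⁿ`, since `exp ∘ f ≡ 1` forces `f = 0` (rescale so that `f z = 1`). Along the winding,
`F ∘ ω = ∑ F_m · exp ∘ μ_m`, so Dedekind's independence of characters shows it is not identically
zero.
-/

open Complex Function

section

variable {E : Type*} [AddCommGroup E] [Module ℂ E]

theorem LinearMap.eq_zero_of_forall_exp_eq_one {f : E →ₗ[ℂ] ℂ} (h : ∀ z, exp (f z) = 1) :
    f = 0 := by
  ext z
  by_contra hz
  have h1 := h ((f z)⁻¹ • z)
  rw [map_smul, smul_eq_mul, inv_mul_cancel₀ hz, ← ofReal_one, ← ofReal_exp, ofReal_inj,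
    Real.exp_eq_one_iff] at h1
  exact one_ne_zero h1

noncomputable def LinearMap.expChar (f : E →ₗ[ℂ] ℂ) : Multiplicative E →* ℂ where
  toFun z := exp (f z.toAdd)
  map_one' := by simp
  map_mul' x y := by simp [exp_add]

theorem LinearMap.expChar_injective : Injective (LinearMap.expChar (E := E)) := by
  intro f g hfg
  rw [← sub_eq_zero]
  refine LinearMap.eq_zero_of_forall_exp_eq_one fun z => ?_
  rw [LinearMap.sub_apply, exp_sub, div_eq_one_iff_eq (exp_ne_zero _)]
  exact DFunLike.congr_fun hfg (Multiplicative.ofAdd z)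

theorem linearIndependent_exp_comp {ι : Type*} {μ : ι → E →ₗ[ℂ] ℂ} (hμ : Injective μ) :
    LinearIndependent ℂ fun i (z : E) => exp (μ i z) :=
  (linearIndependent_monoidHom (Multiplicative E) ℂ).comp (LinearMap.expChar ∘ μ)
    (LinearMap.expChar_injective.comp hμ)

end

/-- **Zariski density of the standard winding.**
Let `λ_1, …, λ_q` be ℂ-linear functionals on `ℂⁿ`, linearly independent over `ℤ`, and let
`ω : ℂⁿ → (ℂ∖{0})^q` be the standard winding `ω(z) = (exp (λ_1 z), …, exp (λ_q z))`.
Then `ω(ℂⁿ)` is Zariski dense in the torus: every nonzero Laurent polynomial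
`F ∈ ℂ[ℤ^q]` is nonzero at some point `ω(z)`. -/
theorem standard_winding_zariski_dense
    (n q : ℕ) (lam : Fin q → Module.Dual ℂ (Fin n → ℂ))
    (hindep : ∀ m : Fin q → ℤ, ∑ j, m j • lam j = 0 → m = 0)
    (F : AddMonoidAlgebra ℂ (Fin q → ℤ)) (hF : F ≠ 0) :
    ∃ z : Fin n → ℂ,
      ∑ m ∈ F.coeff.support, F.coeff m * ∏ j, Complex.exp (lam j z) ^ (m j) ≠ 0 := by
  have hinj : Injective (Fintype.linearCombination ℤ lam) :=
    (Fintype.linearIndependent_iff.mpr fun m hm => congrFun (hindep m hm))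
      |>.fintypeLinearCombination_injective
  by_contra! h
  have hcomb : Finsupp.linearCombination ℂ
      (fun m (z : Fin n → ℂ) => exp (Fintype.linearCombination ℤ lam m z)) F.coeff = 0 := by
    funext z
    rw [Pi.zero_apply, ← h z, Finsupp.linearCombination_apply, Finsupp.sum, Finset.sum_apply]
    refine Finset.sum_congr rfl fun m _ => ?_
    simp [Fintype.linearCombination_apply, LinearMap.sum_apply, exp_sum, exp_int_mul]
  exact hF (AddMonoidAlgebra.coeff_eq_zero.mp
    (linearIndependent_iff.mp (linearIndependent_exp_comp hinj) _ hcomb))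
end

section
/- Let α, c ∈ ℂ with α ≠ 0 and c ≠ 0, and let X = {z ∈ ℂ : exp(α·z) = c} be the zero set of the exponential sum f(z) = e^{αz} − c. Then the 1-density of X exists and d_1(X) = |α|/(2π); that is, the number N(X,r) of points of X in the closed disk of radius r centered at 0 satisfies N(X,r)/(2r) → |α|/(2π) as r → ∞. -/
set_option autoImplicit false

open Filter Topology Metric Complex Real

/-!
The solutions of `exp (α z) = c` form the arithmetic progression `log c / α + n • w`, `n : ℤ`,
with step `w = 2πi / α` of norm `2π / ‖α‖`. By the triangle inequality the point of index `n`
lies in the disk of radius `r` if `|n| ‖w‖ ≤ r - ‖log c / α‖` and only if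
`|n| ‖w‖ ≤ r + ‖log c / α‖`, so the disk contains `2r / ‖w‖ + O(1)` solutions.
-/

theorem Int.setOf_abs_le_eq_Icc {b : ℝ} (hb : 0 ≤ b) :
    {n : ℤ | |(n : ℝ)| ≤ b} = Set.Icc (-(⌊b⌋₊ : ℤ)) ⌊b⌋₊ := by
  ext n
  rw [Set.mem_ofPred_eq, ← Int.cast_abs, ← Int.natCast_natAbs, Int.cast_natCast,
    ← Nat.le_floor_iff hb, Set.mem_Icc]
  omega

theorem Int.card_setOf_abs_le {b : ℝ} (hb : 0 ≤ b) :
    Nat.card {n : ℤ | |(n : ℝ)| ≤ b} = 2 * ⌊b⌋₊ + 1 := by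
  rw [Int.setOf_abs_le_eq_Icc hb, Nat.card_eq_fintype_card]
  simp only [Fintype.card_ofFinset, Int.card_Icc, sub_neg_eq_add]
  omega

theorem Int.card_setOf_abs_le_mem_Icc {b : ℝ} (hb : 0 ≤ b) :
    (Nat.card {n : ℤ | |(n : ℝ)| ≤ b} : ℝ) ∈ Set.Icc (2 * b - 1) (2 * b + 1) := by
  rw [Int.card_setOf_abs_le hb]
  push_cast
  constructor <;> linarith [Nat.floor_le hb, Nat.lt_floor_add_one b]

theorem tendsto_div_of_abs_sub_mul_le {f : ℝ → ℝ} {a C : ℝ}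
    (h : ∀ᶠ r in atTop, |f r - a * r| ≤ C) : Tendsto (fun r => f r / r) atTop (𝓝 a) := by
  have hsmall : Tendsto (fun r => (f r - a * r) / r) atTop (𝓝 0) := by
    refine squeeze_zero_norm' (a := fun r => C / r) ?_ (tendsto_const_nhds.div_atTop tendsto_id)
    filter_upwards [h, eventually_gt_atTop 0] with r hr hr0
    rw [norm_div, Real.norm_of_nonneg hr0.le]
    exact div_le_div_of_nonneg_right hr hr0.le
  have hlim := hsmall.const_add a
  rw [add_zero] at hlim
  refine hlim.congr' ?_
  filter_upwards [eventually_ne_atTop 0] with r hr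
  field_simp
  ring

section Progression

variable {E : Type*} [NormedAddCommGroup E] [NormedSpace ℝ E]

theorem abs_card_zsmul_mem_closedBall_sub_le (z₀ : E) {w : E} (hw : w ≠ 0) {r : ℝ}
    (hr : ‖z₀‖ ≤ r) :
    |(Nat.card {n : ℤ | z₀ + n • w ∈ closedBall 0 r} : ℝ) - 2 / ‖w‖ * r|
      ≤ 2 * ‖z₀‖ / ‖w‖ + 1 := by
  have hL : 0 < ‖w‖ := norm_pos_iff.2 hw
  have hnorm (n : ℤ) : ‖n • w‖ = |(n : ℝ)| * ‖w‖ := by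
    rw [norm_zsmul ℝ, Real.norm_eq_abs]
  have hinner : {n : ℤ | |(n : ℝ)| ≤ (r - ‖z₀‖) / ‖w‖}
      ⊆ {n : ℤ | z₀ + n • w ∈ closedBall 0 r} := by
    intro n hn
    rw [Set.mem_ofPred_eq, le_div_iff₀ hL] at hn
    rw [Set.mem_ofPred_eq, mem_closedBall_zero_iff]
    linarith [norm_add_le z₀ (n • w), hnorm n]
  have houter : {n : ℤ | z₀ + n • w ∈ closedBall 0 r}
      ⊆ {n : ℤ | |(n : ℝ)| ≤ (r + ‖z₀‖) / ‖w‖} := by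
    intro n hn
    rw [Set.mem_ofPred_eq, mem_closedBall_zero_iff] at hn
    rw [Set.mem_ofPred_eq, le_div_iff₀ hL, ← hnorm]
    have := norm_sub_le (z₀ + n • w) z₀
    rw [add_sub_cancel_left] at this
    linarith
  have hinner_nonneg : 0 ≤ (r - ‖z₀‖) / ‖w‖ := div_nonneg (by linarith) hL.le
  have houter_nonneg : 0 ≤ (r + ‖z₀‖) / ‖w‖ := div_nonneg (by linarith [norm_nonneg z₀]) hL.le
  have hfin : {n : ℤ | |(n : ℝ)| ≤ (r + ‖z₀‖) / ‖w‖}.Finite := by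
    rw [Int.setOf_abs_le_eq_Icc houter_nonneg]
    exact Set.finite_Icc _ _
  have hlow : (Nat.card {n : ℤ | |(n : ℝ)| ≤ (r - ‖z₀‖) / ‖w‖} : ℝ) ≤ _ :=
    Nat.cast_le.2 (Nat.card_mono (hfin.subset houter) hinner)
  have hup : (Nat.card {n : ℤ | z₀ + n • w ∈ closedBall 0 r} : ℝ) ≤ _ :=
    Nat.cast_le.2 (Nat.card_mono hfin houter)
  have h₁ := (Int.card_setOf_abs_le_mem_Icc hinner_nonneg).1
  have h₂ := (Int.card_setOf_abs_le_mem_Icc houter_nonneg).2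
  have e₁ : 2 * ((r - ‖z₀‖) / ‖w‖) = 2 / ‖w‖ * r - 2 * ‖z₀‖ / ‖w‖ := by ring
  have e₂ : 2 * ((r + ‖z₀‖) / ‖w‖) = 2 / ‖w‖ * r + 2 * ‖z₀‖ / ‖w‖ := by ring
  rw [abs_le]
  constructor <;> linarith

theorem card_range_add_zsmul_inter_closedBall (z₀ : E) {w : E} (hw : w ≠ 0) (r : ℝ) :
    Nat.card ↥(Set.range (fun n : ℤ => z₀ + n • w) ∩ closedBall 0 r)
      = Nat.card {n : ℤ | z₀ + n • w ∈ closedBall 0 r} := by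
  have hinj : Function.Injective fun n : ℤ => z₀ + n • w :=
    (add_right_injective z₀).comp fun m n h => Int.cast_injective (α := ℝ)
      (smul_left_injective ℝ hw (by simpa only [Int.cast_smul_eq_zsmul] using h))
  rw [Set.inter_comm, ← Set.image_preimage_eq_inter_range, Nat.card_image_of_injective hinj]
  rfl

theorem tendsto_card_range_add_zsmul_inter_closedBall_div (z₀ : E) {w : E} (hw : w ≠ 0) :
    Tendsto (fun r : ℝ =>
        (Nat.card ↥(Set.range (fun n : ℤ => z₀ + n • w) ∩ closedBall 0 r) : ℝ) / r)
      atTop (𝓝 (2 / ‖w‖)) := by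
  simp_rw [card_range_add_zsmul_inter_closedBall z₀ hw]
  exact tendsto_div_of_abs_sub_mul_le <| (eventually_ge_atTop ‖z₀‖).mono fun _ hr =>
    abs_card_zsmul_mem_closedBall_sub_le z₀ hw hr

end Progression

theorem Complex.setOf_exp_mul_eq {α c : ℂ} (hα : α ≠ 0) (hc : c ≠ 0) :
    {z : ℂ | exp (α * z) = c} = Set.range fun n : ℤ => log c / α + n • (2 * π * I / α) := by
  ext z
  rw [Set.mem_ofPred_eq, Set.mem_range, ← exp_log hc, exp_eq_exp_iff_exists_int, exp_log hc]
  refine exists_congr fun n => ?_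
  rw [zsmul_eq_mul, mul_div_assoc', ← add_div, div_eq_iff hα, mul_comm z, eq_comm]

theorem Complex.norm_two_pi_I_div (α : ℂ) : ‖2 * π * I / α‖ = 2 * π / ‖α‖ := by
  rw [norm_div, norm_mul, norm_I, mul_one, norm_mul, Complex.norm_ofNat, norm_real,
    Real.norm_of_nonneg Real.pi_pos.le]

/-- **1-density of the solution set of `e^{αz} = c`.**
For `α ≠ 0` and `c ≠ 0`, the set `X = {z ∈ ℂ : exp (αz) = c}` has 1-density
`|α|/(2π)`: the number `N(X,r)` of its points in the closed disk of radius `r`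
about `0` satisfies `N(X,r)/(2r) → |α|/(2π)` as `r → ∞`. -/
theorem density_of_solutions_exp_eq_const
    (α c : ℂ) (hα : α ≠ 0) (hc : c ≠ 0) :
    Tendsto
      (fun r : ℝ =>
        (Nat.card ↥({z : ℂ | Complex.exp (α * z) = c} ∩ Metric.closedBall (0 : ℂ) r) : ℝ)
          / (2 * r))
      atTop (nhds (‖α‖ / (2 * Real.pi))) := by
  have hw : 2 * π * I / α ≠ 0 := div_ne_zero two_pi_I_ne_zero hα
  have hlim := (tendsto_card_range_add_zsmul_inter_closedBall_div (log c / α) hw).div_const 2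
  have hval : 2 / ‖2 * π * I / α‖ / 2 = ‖α‖ / (2 * π) := by
    rw [norm_two_pi_I_div]
    field_simp
  rw [hval] at hlim
  rw [setOf_exp_mul_eq hα hc]
  exact hlim.congr fun r => by rw [div_div, mul_comm r 2]
end

section
/- Let U be a domain of relatively full measure in a finite-dimensional real normed vector space E with base 𝔍 (a finite set of proper linear subspaces of E), and let L ⊆ E be a linear subspace that is not contained in any subspace I ∈ 𝔍. Then U ∩ L is a domain of relatively full measure in L (with the induced norm), with base {I ∩ L : I ∈ 𝔍}. -/
set_option autoImplicit false

open scoped Classical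

/-- `U` is a domain of relatively full measure with base `𝔍`: `𝔍` is a finite set of
proper linear subspaces and, for some `R > 0`, the set `B^R_𝔍` of points at distance
at least `R` from every subspace of `𝔍` is contained in `U`. -/
def IsRFMBase {E : Type*} [NormedAddCommGroup E] [NormedSpace ℝ E]
    (𝔍 : Finset (Submodule ℝ E)) (U : Set E) : Prop :=
  (∀ I ∈ 𝔍, I ≠ ⊤) ∧
    ∃ R : ℝ, 0 < R ∧ {x : E | ∀ I ∈ 𝔍, R ≤ Metric.infDist x (I : Set E)} ⊆ U

open Metric in
/-- Comparison of the distance to `I ∩ L` inside `L` with the distance to `I` in `E`. -/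
lemma rfm_key {E : Type*} [NormedAddCommGroup E] [NormedSpace ℝ E] [FiniteDimensional ℝ E]
    (L I : Submodule ℝ E) :
    ∃ c : ℝ, 0 < c ∧ ∀ x : L,
      infDist x ((I.comap L.subtype : Submodule ℝ L) : Set L) ≤ c * infDist (x : E) (I : Set E) := by
  classical
  set K : Submodule ℝ L := I.comap L.subtype
  haveI : IsClosed (K : Set L) := K.closed_of_finiteDimensional
  haveI : IsClosed (I : Set E) := I.closed_of_finiteDimensional
  let f : L →ₗ[ℝ] E ⧸ I := I.mkQ.comp L.subtype
  have hker : LinearMap.ker f = K := by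
    ext x
    simp [f, K, Submodule.mem_comap]
  let ψ : (L ⧸ K) →ₗ[ℝ] E ⧸ I := K.liftQ f hker.ge
  have hψker : LinearMap.ker ψ = ⊥ := by
    rw [Submodule.ker_liftQ, hker, eq_bot_iff]
    rintro y ⟨x, hx, rfl⟩
    simpa [Submodule.Quotient.mk_eq_zero] using hx
  obtain ⟨c, hc, hac⟩ := ψ.exists_antilipschitzWith hψker
  refine ⟨c, hc, fun x => ?_⟩
  have h1 : (infDist x ((K : Submodule ℝ L) : Set L)) = ‖(Submodule.Quotient.mk x : L ⧸ K)‖ :=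
    (QuotientAddGroup.norm_mk (S := K.toAddSubgroup) x).symm
  have h2 : infDist (x : E) (I : Set E) = ‖(Submodule.Quotient.mk (x : E) : E ⧸ I)‖ :=
    (QuotientAddGroup.norm_mk (S := I.toAddSubgroup) (x : E)).symm
  have h3 : ψ (Submodule.Quotient.mk x) = Submodule.Quotient.mk (x : E) := rfl
  have := hac.le_mul_dist (Submodule.Quotient.mk x : L ⧸ K) 0
  simp only [map_zero, dist_zero_right, h3] at this
  rw [h1, h2]
  exact_mod_cast this

/-- **Intersecting a domain of relatively full measure with a subspace.**
If `U` is a domain of relatively full measure in the finite-dimensional real normed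
space `E` with base `𝔍`, and `L ⊆ E` is a linear subspace not contained in any member
of `𝔍`, then `U ∩ L` is a domain of relatively full measure in `L` (with the induced
norm), with base `{I ∩ L : I ∈ 𝔍}`. -/
theorem rfm_inter_subspace {E : Type*} [NormedAddCommGroup E] [NormedSpace ℝ E]
    [FiniteDimensional ℝ E]
    (U : Set E) (𝔍 : Finset (Submodule ℝ E)) (hU : IsRFMBase 𝔍 U)
    (L : Submodule ℝ E) (hL : ∀ I ∈ 𝔍, ¬ L ≤ I) :
    IsRFMBase (𝔍.image fun I => I.comap L.subtype)
      ((Subtype.val ⁻¹' U : Set L)) := by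
  obtain ⟨-, R, hR, hB⟩ := hU
  choose c hc hineq using fun I : Submodule ℝ E => rfm_key L I
  constructor
  · intro J hJ
    obtain ⟨I, hI, rfl⟩ := Finset.mem_image.mp hJ
    rw [Ne, Submodule.comap_subtype_eq_top]
    exact hL I hI
  · set C : ℝ := 1 + ∑ I ∈ 𝔍, |c I| with hC
    have hCpos : 0 < C := by
      have : (0:ℝ) ≤ ∑ I ∈ 𝔍, |c I| := Finset.sum_nonneg fun I _ => abs_nonneg _
      linarith
    have hcC : ∀ I ∈ 𝔍, c I ≤ C := by
      intro I hI
      have h1 : |c I| ≤ ∑ J ∈ 𝔍, |c J| :=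
        Finset.single_le_sum (fun J _ => abs_nonneg (c J)) hI
      have := le_abs_self (c I)
      linarith
    refine ⟨R * C, by positivity, fun x hx => ?_⟩
    apply hB
    intro I hI
    have hxI : R * C ≤ Metric.infDist x ((I.comap L.subtype : Submodule ℝ L) : Set L) :=
      hx _ (Finset.mem_image_of_mem _ hI)
    have h2 := hineq I x
    have h3 := Metric.infDist_nonneg (s := (I : Set E)) (x := (x : E))
    have h4 := hcC I hI
    have h5 := hc I
    nlinarith [h2, h3, h4, h5, hR, hCpos]
end

section
/- Let s : E → F be a surjective linear map between finite-dimensional real normed vector spaces and let U ⊆ F be a domain of relatively full measure in F. Then the preimage s⁻¹(U) is a domain of relatively full measure in E (a base being given by the preimages s⁻¹(I) of the subspaces I in a base of U). -/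
set_option autoImplicit false

open scoped Classical

/-- **Preimage of a domain of relatively full measure under a surjective linear map.**
If `s : E → F` is a surjective linear map of finite-dimensional real normed spaces and
`U ⊆ F` is a domain of relatively full measure with base `𝔍`, then `s⁻¹(U)` is a domain
of relatively full measure in `E`, a base being given by the preimages `s⁻¹(I)`,
`I ∈ 𝔍`. -/
theorem rfm_preimage_of_surjective {E F : Type*}
    [NormedAddCommGroup E] [NormedSpace ℝ E] [FiniteDimensional ℝ E]
    [NormedAddCommGroup F] [NormedSpace ℝ F] [FiniteDimensional ℝ F]
    (s : E →ₗ[ℝ] F) (hs : Function.Surjective s)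
    (U : Set F) (𝔍 : Finset (Submodule ℝ F)) (hU : IsRFMBase 𝔍 U) :
    IsRFMBase (𝔍.image fun I => I.comap s) (⇑s ⁻¹' U) := by
  obtain ⟨hproper, R, hR, hsub⟩ := hU
  set S : E →L[ℝ] F := LinearMap.toContinuousLinearMap s with hS
  have hsS : Function.Surjective S := hs
  obtain ⟨C, hC, hCs⟩ := S.exists_preimage_norm_le hsS
  constructor
  · intro J hJ
    simp only [Finset.mem_image] at hJ
    obtain ⟨I, hI, rfl⟩ := hJ
    intro htop
    refine hproper I hI (eq_top_iff.2 fun y _ => ?_)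
    obtain ⟨x, rfl⟩ := hs y
    have : x ∈ Submodule.comap s I := htop ▸ Submodule.mem_top
    exact this
  · refine ⟨C * R, mul_pos hC hR, fun x hx => ?_⟩
    refine hsub fun I hI => ?_
    have hxI : C * R ≤ Metric.infDist x ((Submodule.comap s I : Submodule ℝ E) : Set E) :=
      hx (Submodule.comap s I) (Finset.mem_image.2 ⟨I, hI, rfl⟩)
    -- key : infDist x (comap I) ≤ C * infDist (s x) I
    have key : Metric.infDist x ((Submodule.comap s I : Submodule ℝ E) : Set E)
        ≤ C * Metric.infDist (s x) (I : Set F) := by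
      refine le_of_forall_pos_le_add fun ε hε => ?_
      have hne : (I : Set F).Nonempty := ⟨0, I.zero_mem⟩
      have hlt : Metric.infDist (s x) (I : Set F)
          < Metric.infDist (s x) (I : Set F) + ε / C := by
        linarith [div_pos hε hC]
      obtain ⟨y, hyI, hy⟩ := (Metric.infDist_lt_iff hne).1 hlt
      obtain ⟨z, hz, hznorm⟩ := hCs (S x - y)
      have hmem : x - z ∈ Submodule.comap s I := by
        have : s (x - z) = y := by
          have hzx : s z = s x - y := hz
          simp [map_sub, hzx]
        simpa [Submodule.mem_comap, this] using hyI
      calc Metric.infDist x ((Submodule.comap s I : Submodule ℝ E) : Set E)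
          ≤ dist x (x - z) := Metric.infDist_le_dist_of_mem hmem
        _ = ‖z‖ := by simp [dist_eq_norm]
        _ ≤ C * ‖S x - y‖ := hznorm
        _ = C * dist (s x) y := by rw [dist_eq_norm]; rfl
        _ ≤ C * (Metric.infDist (s x) (I : Set F) + ε / C) :=
            mul_le_mul_of_nonneg_left hy.le hC.le
        _ = C * Metric.infDist (s x) (I : Set F) + ε := by
            field_simp
    nlinarith [Metric.infDist_nonneg (x := s x) (s := (I : Set F))]
end

section
/- Let 𝔍 be a finite set of proper linear subspaces of a finite-dimensional real normed vector space E, let B_𝔍 = E ∖ ⋃_{I∈𝔍} I with connected components B_{𝔍,1}, B_{𝔍,2}, …, and for R > 0 let B^R_𝔍 be the set of points of E at distance ≥ R from ⋃_{I∈𝔍} I. Then the nonempty sets of the form B^R_{𝔍,i} = B^R_𝔍 ∩ B_{𝔍,i} are exactly the connected components of B^R_𝔍. -/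
set_option autoImplicit false

set_option maxHeartbeats 1000000 in
/-- **Connected components of `B^R_𝔍` (Corollary, part (5)).**
Let `𝔍` be a finite set of proper linear subspaces of a finite-dimensional real normed
space `E`, let `B_𝔍 = E ∖ ⋃_{I∈𝔍} I`, and for `R > 0` let `B^R_𝔍` be the set of points
at distance `≥ R` from every subspace in `𝔍`.  Then the nonempty sets
`B^R_𝔍 ∩ B_{𝔍,i}`, where `B_{𝔍,i}` runs over the connected components of `B_𝔍`, are
exactly the connected components of `B^R_𝔍`: for every `x ∈ B^R_𝔍`, the connected
component of `x` in `B^R_𝔍` equals the intersection of `B^R_𝔍` with the connected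
component of `x` in `B_𝔍`. -/
theorem connectedComponents_of_BR {E : Type*} [NormedAddCommGroup E] [NormedSpace ℝ E]
    [FiniteDimensional ℝ E]
    (𝔍 : Finset (Submodule ℝ E)) (h𝔍 : ∀ I ∈ 𝔍, I ≠ ⊤)
    (R : ℝ) (hR : 0 < R) :
    ∀ x ∈ {x : E | ∀ I ∈ 𝔍, R ≤ Metric.infDist x (I : Set E)},
      connectedComponentIn {x : E | ∀ I ∈ 𝔍, R ≤ Metric.infDist x (I : Set E)} x =
        {x : E | ∀ I ∈ 𝔍, R ≤ Metric.infDist x (I : Set E)} ∩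
          connectedComponentIn (⋃ I ∈ 𝔍, (I : Set E))ᶜ x := by
  intro x hx
  rcases 𝔍.eq_empty_or_nonempty with h𝔍e | h𝔍ne
  · subst h𝔍e; simp
  set U : Set E := ⋃ I ∈ 𝔍, (I : Set E) with hUdef
  set BR : Set E := {x : E | ∀ I ∈ 𝔍, R ≤ Metric.infDist x (I : Set E)} with hBRdef
  have hU_closed : IsClosed U := by
    apply Set.Finite.isClosed_biUnion 𝔍.finite_toSet
    intro I _
    exact I.closed_of_finiteDimensional
  have hB_open : IsOpen Uᶜ := hU_closed.isOpen_compl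
  have hUne : U.Nonempty := by
    obtain ⟨I, hI⟩ := h𝔍ne
    exact ⟨0, Set.mem_biUnion hI I.zero_mem⟩
  have hIne : ∀ I : Submodule ℝ E, (I : Set E).Nonempty := fun I => ⟨0, I.zero_mem⟩
  have le_infDist' : ∀ (p : E) (s : Set E), s.Nonempty → (∀ y ∈ s, R ≤ dist p y) →
      R ≤ Metric.infDist p s := by
    intro p s hs h
    by_contra hlt
    push_neg at hlt
    obtain ⟨y, hy, hd⟩ := (Metric.infDist_lt_iff hs).mp hlt
    exact absurd hd (not_lt.mpr (h y hy))
  have hBR_sub : BR ⊆ Uᶜ := by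
    intro p hp hpU
    obtain ⟨I, hI, hpI⟩ := Set.mem_iUnion₂.mp hpU
    have := hp I hI
    rw [Metric.infDist_zero_of_mem hpI] at this
    linarith
  have key : ∀ (c : ℝ), 0 < c → ∀ (p w : E) (I : Submodule ℝ E), w ∈ (I : Set E) →
      c * Metric.infDist p (I : Set E) ≤ dist (c • p) w := by
    intro c hc p w I hw
    have hw' : c⁻¹ • w ∈ (I : Set E) := I.smul_mem _ hw
    have h1 : Metric.infDist p (I : Set E) ≤ dist p (c⁻¹ • w) :=
      Metric.infDist_le_dist_of_mem hw'
    have h2 : dist (c • p) w = c * dist p (c⁻¹ • w) := by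
      calc dist (c • p) w = dist (c • p) (c • (c⁻¹ • w)) := by
            rw [smul_inv_smul₀ hc.ne']
        _ = ‖c‖ * dist p (c⁻¹ • w) := dist_smul₀ _ _ _
        _ = c * dist p (c⁻¹ • w) := by rw [Real.norm_of_nonneg hc.le]
    rw [h2]
    exact mul_le_mul_of_nonneg_left h1 hc.le
  have hxB : x ∈ Uᶜ := hBR_sub hx
  set C := connectedComponentIn Uᶜ x with hC
  have hC_open : IsOpen C := hB_open.connectedComponentIn
  have hC_conn : IsConnected C := isConnected_connectedComponentIn_iff.mpr hxB
  have hC_path : IsPathConnected C := hC_open.isConnected_iff_isPathConnected.mp hC_conn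
  have hC_sub : C ⊆ Uᶜ := connectedComponentIn_subset _ _
  have hxS : x ∈ BR ∩ C := ⟨hx, mem_connectedComponentIn hxB⟩
  have hseg_mem : ∀ (s : ℝ), 1 ≤ s → ∀ p ∈ BR, s • p ∈ BR := by
    intro s hs p hp I hI
    apply le_infDist' _ _ (hIne I)
    intro w hw
    calc R ≤ Metric.infDist p (I : Set E) := hp I hI
      _ ≤ s * Metric.infDist p (I : Set E) :=
          le_mul_of_one_le_left Metric.infDist_nonneg hs
      _ ≤ dist (s • p) w := key s (by linarith) p w I hw
  have hS_joined : ∀ y ∈ BR ∩ C, ∀ z ∈ BR ∩ C, JoinedIn (BR ∩ C) y z := by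
    intro y hy z hz
    obtain ⟨γ, hγ⟩ := hC_path.joinedIn y hy.2 z hz.2
    have hcont : Continuous fun t : unitInterval => Metric.infDist (γ t) U :=
      (Metric.continuous_infDist_pt U).comp γ.continuous
    obtain ⟨t0, -, ht0⟩ := isCompact_univ.exists_isMinOn Set.univ_nonempty
      hcont.continuousOn
    set d := Metric.infDist (γ t0) U with hd
    have hd_pos : 0 < d :=
      (hU_closed.notMem_iff_infDist_pos hUne).mp (hC_sub (hγ t0))
    have hdle : ∀ t, d ≤ Metric.infDist (γ t) U := fun t => isMinOn_iff.mp ht0 t (Set.mem_univ t)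
    set c := max 1 (R / d) with hcdef
    have hc1 : 1 ≤ c := le_max_left _ _
    have hc0 : (0 : ℝ) < c := lt_of_lt_of_le one_pos hc1
    have hcd : R ≤ c * d := by
      calc R = (R / d) * d := by field_simp
        _ ≤ c * d := mul_le_mul_of_nonneg_right (le_max_right _ _) hd_pos.le
    have hscaled_mem : ∀ t, c • γ t ∈ BR := by
      intro t I hI
      apply le_infDist' _ _ (hIne I)
      intro w hw
      calc R ≤ c * d := hcd
        _ ≤ c * Metric.infDist (γ t) (I : Set E) := by
            apply mul_le_mul_of_nonneg_left _ hc0.le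
            exact le_trans (hdle t)
              (Metric.infDist_le_infDist_of_subset
                (Set.subset_biUnion_of_mem hI) (hIne I))
        _ ≤ dist (c • γ t) w := key c hc0 _ w I hw
    have hj1 : JoinedIn BR y (c • y) := by
      apply JoinedIn.ofLine (f := fun s : ℝ => (1 + s * (c - 1)) • y)
      · exact ((continuous_const.add ((continuous_id).mul continuous_const)).smul
          continuous_const).continuousOn
      · norm_num
      · norm_num
      · rintro p ⟨s, hs, rfl⟩
        have hs1 : (1 : ℝ) ≤ 1 + s * (c - 1) := by nlinarith [hs.1, hs.2]
        exact hseg_mem _ hs1 y hy.1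
    have hj3 : JoinedIn BR z (c • z) := by
      apply JoinedIn.ofLine (f := fun s : ℝ => (1 + s * (c - 1)) • z)
      · exact ((continuous_const.add ((continuous_id).mul continuous_const)).smul
          continuous_const).continuousOn
      · norm_num
      · norm_num
      · rintro p ⟨s, hs, rfl⟩
        have hs1 : (1 : ℝ) ≤ 1 + s * (c - 1) := by nlinarith [hs.1, hs.2]
        exact hseg_mem _ hs1 z hz.1
    have hj2 : JoinedIn BR (c • y) (c • z) := by
      refine ⟨γ.map (continuous_const_smul c), ?_⟩
      intro t
      simpa using hscaled_mem t
    have hjBR : JoinedIn BR y z := (hj1.trans hj2).trans hj3.symm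
    obtain ⟨γ', hγ'⟩ := hjBR
    have hrange : Set.range γ' ⊆ C := by
      have hpre : IsPreconnected (Set.range γ') := by
        rw [← Set.image_univ]
        exact isPreconnected_univ.image _ γ'.continuous.continuousOn
      have hyr : y ∈ Set.range γ' := ⟨0, γ'.source⟩
      have hsubB : Set.range γ' ⊆ Uᶜ := by
        rintro p ⟨t, rfl⟩
        exact hBR_sub (hγ' t)
      have := hpre.subset_connectedComponentIn hyr hsubB
      rwa [← connectedComponentIn_eq hy.2] at this
    exact ⟨γ', fun t => ⟨hγ' t, hrange ⟨t, rfl⟩⟩⟩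
  have hS_path : IsPathConnected (BR ∩ C) :=
    ⟨x, hxS, fun {y} hy => hS_joined x hxS y hy⟩
  apply le_antisymm
  · exact Set.subset_inter (connectedComponentIn_subset _ _)
      (connectedComponentIn_mono x hBR_sub)
  · exact hS_path.isConnected.isPreconnected.subset_connectedComponentIn hxS
      Set.inter_subset_left
end
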